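/- arXiv:2211.14281 — 2 statements merged into one kernel-verified Lean document; each statement's English description precedes it below -/
import Mathlib

section
/- Under the 2-convexity condition, the squared norm of the second fundamental form is controlled by the mean curvature: κ₁² + κ₂² + ⋯ + κₙ² ≤ n·H². -/
theorem two_convex_norm_A_sq_le (n : ℕ) (hn : 3 ≤ n) (κ : Fin n → ℝ)
    (hmono : Monotone κ)
    (h2conv : 0 < κ ⟨0, by omega⟩ + κ ⟨1, by omega⟩) :
    ∑ i, (κ i) ^ 2 ≤ (n : ℝ) * (∑ i, κ i) ^ 2 := by
  set H := ∑ i, κ i with hH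
  have h0 : (0:ℕ) < n := by omega
  have i0 : Fin n := ⟨0, by omega⟩
  have h1 : κ (⟨0, by omega⟩ : Fin n) ≤ κ ⟨1, by omega⟩ :=
    hmono (Fin.mk_le_mk.mpr (by omega))
  have h1top : κ (⟨1, by omega⟩ : Fin n) ≤ κ ⟨n - 1, by omega⟩ :=
    hmono (Fin.mk_le_mk.mpr (by omega))
  -- H ≥ κ₀ + κ₁ + κ_{n-1}
  have hsub : κ (⟨0, by omega⟩ : Fin n) + κ ⟨1, by omega⟩ + κ ⟨n - 1, by omega⟩ ≤ H := by
    have hpos : ∀ i : Fin n, 1 ≤ (i : ℕ) → 0 < κ i := by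
      intro i hi
      have : κ (⟨1, by omega⟩ : Fin n) ≤ κ i := hmono (Fin.mk_le_mk.mpr hi)
      linarith
    have hs : ({⟨0, by omega⟩, ⟨1, by omega⟩, ⟨n - 1, by omega⟩} : Finset (Fin n))
        ⊆ Finset.univ := Finset.subset_univ _
    have := Finset.sum_le_sum_of_subset_of_nonneg hs (f := κ) ?_
    · have hsum : ∑ i ∈ ({⟨0, by omega⟩, ⟨1, by omega⟩, ⟨n - 1, by omega⟩} :
          Finset (Fin n)), κ i
          = κ (⟨0, by omega⟩ : Fin n) + κ ⟨1, by omega⟩ + κ ⟨n - 1, by omega⟩ := by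
        rw [Finset.sum_insert, Finset.sum_insert, Finset.sum_singleton]
        · ring
        · simp [Fin.ext_iff]; omega
        · simp [Fin.ext_iff]; omega
      rw [hsum] at this
      exact this
    · intro i _ hi
      refine le_of_lt (hpos i ?_)
      simp [Fin.ext_iff] at hi
      omega
  have key : ∀ i : Fin n, (κ i) ^ 2 ≤ H ^ 2 := by
    intro i
    have hi0 : κ (⟨0, by omega⟩ : Fin n) ≤ κ i := hmono (Fin.mk_le_mk.mpr (by omega))
    have hitop : κ i ≤ κ ⟨n - 1, by omega⟩ := hmono (Fin.mk_le_mk.mpr (by omega))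
    have h2 : κ i ≤ H := by linarith
    have h3 : -H ≤ κ i := by linarith
    exact sq_le_sq' h3 h2
  calc ∑ i, (κ i) ^ 2 ≤ ∑ _i : Fin n, H ^ 2 :=
        Finset.sum_le_sum (fun i _ => key i)
    _ = (n : ℝ) * H ^ 2 := by simp [Finset.sum_const, mul_comm]
end

section
/- Let n ≥ 1, let t₀ ∈ ℝ, and let A : ℝ → Matrix (Fin n) ℝ take values in symmetric matrices, be continuously differentiable on a neighborhood of t₀, and be twice differentiable at t₀. Suppose v₁, …, vₙ : ℝ → (Fin n → ℝ) are continuously differentiable on a neighborhood of t₀ and form an orthonormal basis of ℝⁿ for each t near t₀, and κ₁, …, κₙ : ℝ → ℝ satisfy A(t)·vⱼ(t) = κⱼ(t)·vⱼ(t) for all j and all t near t₀. Fix an index i and assume κ_l(t₀) ≠ κ_i(t₀) for every l ≠ i (the eigenvalue κ_i is simple at t₀). Then κ_i is twice differentiable at t₀ and κ_i''(t₀) = ⟨A''(t₀)·v_i(t₀), v_i(t₀)⟩ - 2·∑_{l ≠ i} ⟨A'(t₀)·v_i(t₀), v_l(t₀)⟩² / (κ_l(t₀) - κ_i(t₀)).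 (This is the pointwise content of formula (2.2) in Lemma 2.3: Δκᵢ = (ΔA)(τᵢ,τᵢ) - 2∑_{l≠i} |(∇A)(τ_l,τᵢ)|²/(κ_l - κᵢ) for a simple eigenvalue of a Codazzi tensor.) -/
/-! Near `t₀` we have `κᵢ = ⟨A vᵢ, vᵢ⟩`. Differentiating, the terms with `vᵢ'` cancel because
`A` is symmetric and `⟨vᵢ', vᵢ⟩ = 0`, which gives the Hellmann–Feynman formula
`κᵢ'(t) = ⟨A'(t) vᵢ(t), vᵢ(t)⟩` on a whole neighbourhood. Differentiating once more,
`κᵢ''(t₀) = ⟨A'' vᵢ, vᵢ⟩ + 2 ⟨A' vᵢ, vᵢ'⟩`, and `vᵢ'` is expanded in the basis `v_l`: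
differentiating `⟨A vᵢ, v_l⟩ = 0` gives `(κ_l - κᵢ) ⟨vᵢ', v_l⟩ = -⟨A' vᵢ, v_l⟩`. -/

open Filter Topology Matrix

section
variable {m n : Type*} {t : ℝ}

theorem isSymm_of_hasDerivAt {A : ℝ → Matrix n n ℝ} {A' : Matrix n n ℝ}
    (hsymm : ∀ᶠ s in 𝓝 t, (A s).IsSymm) (hA : ∀ j k, HasDerivAt (fun s => A s j k) (A' j k) t) :
    A'.IsSymm :=
  IsSymm.ext fun j k => (hA k j).unique <|
    (hA j k).congr_of_eventuallyEq <| hsymm.mono fun _ hs => hs.apply j k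

variable [Fintype n]

theorem HasDerivAt.dotProduct {x y : ℝ → n → ℝ} {x' y' : n → ℝ}
    (hx : HasDerivAt x x' t) (hy : HasDerivAt y y' t) :
    HasDerivAt (fun s => x s ⬝ᵥ y s) (x' ⬝ᵥ y t + x t ⬝ᵥ y') t := by
  have := HasDerivAt.fun_sum (u := Finset.univ) fun k _ =>
    (hasDerivAt_pi.1 hx k).fun_mul (hasDerivAt_pi.1 hy k)
  rwa [Finset.sum_add_distrib] at this

theorem HasDerivAt.mulVec {A : ℝ → Matrix m n ℝ} {A' : Matrix m n ℝ} {x : ℝ → n → ℝ} {x' : n → ℝ}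
    (hA : ∀ j k, HasDerivAt (fun s => A s j k) (A' j k) t) (hx : HasDerivAt x x' t) :
    HasDerivAt (fun s => A s *ᵥ x s) (A' *ᵥ x t + A t *ᵥ x') t :=
  hasDerivAt_pi.2 fun j => (hasDerivAt_pi.2 (hA j)).dotProduct hx

theorem Matrix.IsSymm.mulVec_dotProduct_comm {R : Type*} [CommSemiring R] {A : Matrix n n R}
    (hA : A.IsSymm) (x y : n → R) : A *ᵥ x ⬝ᵥ y = A *ᵥ y ⬝ᵥ x := by
  rw [dotProduct_comm, dotProduct_mulVec, ← vecMul_transpose, hA.eq]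

theorem HasDerivAt.add_dotProduct_eq_zero_of_eventually_const {x y : ℝ → n → ℝ} {x' y' : n → ℝ}
    {c : ℝ} (hx : HasDerivAt x x' t) (hy : HasDerivAt y y' t)
    (hc : ∀ᶠ s in 𝓝 t, x s ⬝ᵥ y s = c) :
    x' ⬝ᵥ y t + x t ⬝ᵥ y' = 0 :=
  (hx.dotProduct hy).unique ((hasDerivAt_const t c).congr_of_eventuallyEq hc)

theorem HasDerivAt.dotProduct_self_eq_zero_of_eventually_const {x : ℝ → n → ℝ} {x' : n → ℝ}
    {c : ℝ} (hx : HasDerivAt x x' t) (hc : ∀ᶠ s in 𝓝 t, x s ⬝ᵥ x s = c) :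
    x' ⬝ᵥ x t = 0 := by
  have h := hx.add_dotProduct_eq_zero_of_eventually_const hx hc
  rw [dotProduct_comm (x t)] at h
  linarith

theorem HasDerivAt.mulVec_dotProduct_of_eigenvectors {A : ℝ → Matrix n n ℝ} {A' : Matrix n n ℝ}
    {x y : ℝ → n → ℝ} {x' y' : n → ℝ} {μ ν : ℝ} (hsymm : (A t).IsSymm)
    (hA : ∀ j k, HasDerivAt (fun s => A s j k) (A' j k) t)
    (hx : HasDerivAt x x' t) (hy : HasDerivAt y y' t)
    (hAx : A t *ᵥ x t = μ • x t) (hAy : A t *ᵥ y t = ν • y t) :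
    HasDerivAt (fun s => A s *ᵥ x s ⬝ᵥ y s)
      (A' *ᵥ x t ⬝ᵥ y t + ν * (x' ⬝ᵥ y t) + μ * (x t ⬝ᵥ y')) t := by
  convert (HasDerivAt.mulVec hA hx).dotProduct hy using 1
  rw [add_dotProduct, hsymm.mulVec_dotProduct_comm x', hAx, hAy, smul_dotProduct,
    smul_dotProduct, smul_eq_mul, smul_eq_mul, dotProduct_comm (y t)]

theorem hasDerivAt_eigenvalue {A : ℝ → Matrix n n ℝ} {A' : Matrix n n ℝ} {x : ℝ → n → ℝ}
    {x' : n → ℝ} {κ : ℝ → ℝ} (hsymm : (A t).IsSymm)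
    (hA : ∀ j k, HasDerivAt (fun s => A s j k) (A' j k) t) (hx : HasDerivAt x x' t)
    (hunit : ∀ᶠ s in 𝓝 t, x s ⬝ᵥ x s = 1) (heig : ∀ᶠ s in 𝓝 t, A s *ᵥ x s = κ s • x s) :
    HasDerivAt κ (A' *ᵥ x t ⬝ᵥ x t) t := by
  have hκ : (fun s => A s *ᵥ x s ⬝ᵥ x s) =ᶠ[𝓝 t] κ := by
    filter_upwards [hunit, heig] with s h1 h2
    rw [h2, smul_dotProduct, h1, smul_eq_mul, mul_one]
  have hx' := hx.dotProduct_self_eq_zero_of_eventually_const hunit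
  refine ((HasDerivAt.mulVec_dotProduct_of_eigenvectors hsymm hA hx hx heig.self_of_nhds
    heig.self_of_nhds).congr_of_eventuallyEq hκ.symm).congr_deriv ?_
  rw [dotProduct_comm (x t), hx']
  ring

theorem sub_mul_dotProduct_eq_neg_of_eigenvectors {A : ℝ → Matrix n n ℝ} {A' : Matrix n n ℝ}
    {x y : ℝ → n → ℝ} {x' y' : n → ℝ} {μ : ℝ → ℝ} {ν : ℝ} (hsymm : (A t).IsSymm)
    (hA : ∀ j k, HasDerivAt (fun s => A s j k) (A' j k) t)
    (hx : HasDerivAt x x' t) (hy : HasDerivAt y y' t) (horth : ∀ᶠ s in 𝓝 t, x s ⬝ᵥ y s = 0)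
    (hAx : ∀ᶠ s in 𝓝 t, A s *ᵥ x s = μ s • x s) (hAy : A t *ᵥ y t = ν • y t) :
    (ν - μ t) * (x' ⬝ᵥ y t) = -(A' *ᵥ x t ⬝ᵥ y t) := by
  have hzero : (fun s => A s *ᵥ x s ⬝ᵥ y s) =ᶠ[𝓝 t] fun _ => 0 := by
    filter_upwards [horth, hAx] with s h1 h2
    rw [h2, smul_dotProduct, h1, smul_zero]
  have hderiv := (HasDerivAt.mulVec_dotProduct_of_eigenvectors hsymm hA hx hy hAx.self_of_nhds
    hAy).unique ((hasDerivAt_const t 0).congr_of_eventuallyEq hzero)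
  have hsum := hx.add_dotProduct_eq_zero_of_eventually_const hy horth
  linear_combination hderiv - μ t * hsum

theorem dotProduct_eq_sum_mul_of_orthonormal {R : Type*} [CommRing R] [DecidableEq n]
    {w : n → n → R} (hw : ∀ j k, w j ⬝ᵥ w k = if j = k then 1 else 0) (a b : n → R) :
    a ⬝ᵥ b = ∑ l, (a ⬝ᵥ w l) * (b ⬝ᵥ w l) := by
  have hV : (of w)ᵀ * of w = 1 :=
    mul_eq_one_comm.1 (by ext j k; simpa [mul_apply, dotProduct, one_apply] using hw j k)
  calc a ⬝ᵥ b = a ⬝ᵥ ((of w)ᵀ * of w) *ᵥ b := by rw [hV, one_mulVec]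
    _ = (of w *ᵥ a) ⬝ᵥ (of w *ᵥ b) := by
      rw [← mulVec_mulVec, dotProduct_mulVec, vecMul_transpose]
    _ = ∑ l, (a ⬝ᵥ w l) * (b ⬝ᵥ w l) := by
      simp only [dotProduct, mulVec, of_apply, mul_comm]

theorem dotProduct_eq_neg_sum_sq_div_of_orthonormal [DecidableEq n] {w : n → n → ℝ}
    (hw : ∀ j k, w j ⬝ᵥ w k = if j = k then 1 else 0) {a b κ : n → ℝ} {i : n}
    (hbi : b ⬝ᵥ w i = 0) (hb : ∀ l, l ≠ i → (κ l - κ i) * (b ⬝ᵥ w l) = -(a ⬝ᵥ w l)) :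
    a ⬝ᵥ b = -∑ l ∈ Finset.univ.filter (fun l => l ≠ i), (a ⬝ᵥ w l) ^ 2 / (κ l - κ i) := by
  rw [dotProduct_eq_sum_mul_of_orthonormal hw, Finset.sum_filter, ← Finset.sum_neg_distrib]
  refine Finset.sum_congr rfl fun l _ => ?_
  split_ifs with hl
  · -- if `κ l = κ i`, then `hb` forces `a ⬝ᵥ w l = 0` and the term is `0 / 0 = 0`
    by_cases hκ : κ l = κ i
    · have ha : a ⬝ᵥ w l = 0 := by simpa [hκ] using hb l hl
      simp [ha]
    · field_simp [sub_ne_zero.2 hκ]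
      linear_combination (a ⬝ᵥ w l) * hb l hl
  · rw [not_not.1 hl, hbi, mul_zero, neg_zero]

end

theorem eigenvalue_second_variation_general (n : ℕ) (t₀ : ℝ)
    (A : ℝ → Matrix (Fin n) (Fin n) ℝ) (hsymm : ∀ t, (A t).IsSymm)
    (U : Set ℝ) (hU : U ∈ nhds t₀)
    (hAC1 : ∀ i j, ContDiffOn ℝ 1 (fun t => A t i j) U)
    (A' A'' : Matrix (Fin n) (Fin n) ℝ)
    (hA' : ∀ i j, HasDerivAt (fun t => A t i j) (A' i j) t₀)
    (hA'' : ∀ i j, HasDerivAt (deriv (fun t => A t i j)) (A'' i j) t₀)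
    (v : Fin n → ℝ → Fin n → ℝ)
    (hvC1 : ∀ j i, ContDiffOn ℝ 1 (fun t => v j t i) U)
    (horth : ∀ t ∈ U, ∀ j k : Fin n, v j t ⬝ᵥ v k t = if j = k then (1 : ℝ) else 0)
    (κ : Fin n → ℝ → ℝ)
    (heig : ∀ t ∈ U, ∀ j : Fin n, (A t).mulVec (v j t) = κ j t • v j t)
    (i : Fin n) :
    HasDerivAt (deriv (κ i))
      (A''.mulVec (v i t₀) ⬝ᵥ v i t₀ -
        2 * ∑ l ∈ Finset.univ.filter (fun l => l ≠ i),
          (A'.mulVec (v i t₀) ⬝ᵥ v l t₀) ^ 2 / (κ l t₀ - κ i t₀)) t₀ := by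
  have hUt : ∀ t ∈ interior U, U ∈ 𝓝 t := fun t => mem_interior_iff_mem_nhds.1
  have ht₀ : t₀ ∈ interior U := mem_interior_iff_mem_nhds.2 hU
  have hA : ∀ t ∈ interior U, ∀ j k,
      HasDerivAt (fun s => A s j k) (deriv (fun s => A s j k) t) t := fun t ht j k =>
    (((hAC1 j k).differentiableOn one_ne_zero).differentiableAt (hUt t ht)).hasDerivAt
  have hv : ∀ j, ∀ t ∈ interior U, HasDerivAt (v j) (deriv (v j) t) t := fun j t ht =>
    (differentiableAt_pi.2 fun k =>
      ((hvC1 j k).differentiableOn one_ne_zero).differentiableAt (hUt t ht)).hasDerivAt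
  have hκ' : deriv (κ i) =ᶠ[𝓝 t₀]
      fun t => of (fun j k => deriv (fun s => A s j k) t) *ᵥ v i t ⬝ᵥ v i t := by
    filter_upwards [isOpen_interior.mem_nhds ht₀] with t ht
    refine (hasDerivAt_eigenvalue (hsymm t) (hA t ht) (hv i t ht) ?_ ?_).deriv
    · filter_upwards [hUt t ht] with s hs using by simpa using horth s hs i i
    · filter_upwards [hUt t ht] with s hs using heig s hs i
  have hA'_eq : of (fun j k => deriv (fun s => A s j k) t₀) = A' := ext fun j k => (hA' j k).deriv
  have hκ'' := (HasDerivAt.mulVec (A := fun t => of fun j k => deriv (fun s => A s j k) t)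
    hA'' (hv i t₀ ht₀)).dotProduct (hv i t₀ ht₀)
  rw [hA'_eq] at hκ''
  refine (hκ''.congr_of_eventuallyEq hκ').congr_deriv ?_
  have hvi := (hv i t₀ ht₀).dotProduct_self_eq_zero_of_eventually_const
    (c := 1) (by filter_upwards [hU] with s hs using by simpa using horth s hs i i)
  have hvl : ∀ l, l ≠ i → (κ l t₀ - κ i t₀) * (deriv (v i) t₀ ⬝ᵥ v l t₀) =
      -(A' *ᵥ v i t₀ ⬝ᵥ v l t₀) := fun l hl =>
    sub_mul_dotProduct_eq_neg_of_eigenvectors (hsymm t₀) hA' (hv i t₀ ht₀) (hv l t₀ ht₀)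
      (by filter_upwards [hU] with s hs using by simpa [hl.symm] using horth s hs i l)
      (by filter_upwards [hU] with s hs using heig s hs i) (heig t₀ (mem_of_mem_nhds hU) l)
  rw [add_dotProduct, (isSymm_of_hasDerivAt (.of_forall hsymm) hA').mulVec_dotProduct_comm,
    dotProduct_eq_neg_sum_sq_div_of_orthonormal (horth t₀ (mem_of_mem_nhds hU)) hvi hvl]
  ring

theorem eigenvalue_second_variation (n : ℕ) (hn : 1 ≤ n) (t₀ : ℝ)
    (A : ℝ → Matrix (Fin n) (Fin n) ℝ) (hsymm : ∀ t, (A t).IsSymm)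
    (U : Set ℝ) (hU : U ∈ nhds t₀)
    (hAC1 : ∀ i j, ContDiffOn ℝ 1 (fun t => A t i j) U)
    (A' A'' : Matrix (Fin n) (Fin n) ℝ)
    (hA' : ∀ i j, HasDerivAt (fun t => A t i j) (A' i j) t₀)
    (hA'' : ∀ i j, HasDerivAt (deriv (fun t => A t i j)) (A'' i j) t₀)
    (v : Fin n → ℝ → Fin n → ℝ)
    (hvC1 : ∀ j i, ContDiffOn ℝ 1 (fun t => v j t i) U)
    (horth : ∀ t ∈ U, ∀ j k : Fin n, v j t ⬝ᵥ v k t = if j = k then (1 : ℝ) else 0)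
    (κ : Fin n → ℝ → ℝ)
    (heig : ∀ t ∈ U, ∀ j : Fin n, (A t).mulVec (v j t) = κ j t • v j t)
    (i : Fin n) (hsimple : ∀ l : Fin n, l ≠ i → κ l t₀ ≠ κ i t₀) :
    HasDerivAt (deriv (κ i))
      (A''.mulVec (v i t₀) ⬝ᵥ v i t₀ -
        2 * ∑ l ∈ Finset.univ.filter (fun l => l ≠ i),
          (A'.mulVec (v i t₀) ⬝ᵥ v l t₀) ^ 2 / (κ l t₀ - κ i t₀)) t₀ :=
  eigenvalue_second_variation_general n t₀ A hsymm U hU hAC1 A' A'' hA' hA'' v hvC1 horth κ heig i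
end
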